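/- Schur's theorem: if the centre of a group G has finite index in G, then the commutator subgroup of G is finite. -/

import Mathlib

/-!
A commutator `⁅g, h⁆` is unchanged when `g` or `h` is multiplied by a central element, so it only
depends on the cosets `g Z(G)` and `h Z(G)`; a centre of finite index therefore leaves only
finitely many commutators. Mathlib's instance in `Mathlib.GroupTheory.Schreier` (Schreier's lemma
and the transfer into the centre) turns finitely many commutators into a finite commutator subgroup.
-/

open Subgroup
open scoped commutatorElement

namespace Subgroup

variable {G : Type*} [Group G]

theorem commutatorElement_mul_of_mem_center_left (g h : G) {z : G} (hz : z ∈ center G) :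
    ⁅g * z, h⁆ = ⁅g, h⁆ := by
  rw [mem_center_iff] at hz
  simp only [commutatorElement_def, mul_inv_rev]
  calc g * z * h * (z⁻¹ * g⁻¹) * h⁻¹ = g * (z * h) * z⁻¹ * g⁻¹ * h⁻¹ := by group
    _ = g * h * g⁻¹ * h⁻¹ := by rw [← hz h]; group

theorem commutatorElement_mul_of_mem_center_right (g h : G) {z : G} (hz : z ∈ center G) :
    ⁅g, h * z⁆ = ⁅g, h⁆ := by
  rw [← commutatorElement_inv, commutatorElement_mul_of_mem_center_left h g hz,
    commutatorElement_inv]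

theorem commutatorElement_out_mk_center (g h : G) :
    ⁅(g : G ⧸ center G).out, (h : G ⧸ center G).out⁆ = ⁅g, h⁆ := by
  obtain ⟨⟨z, hz⟩, hgz⟩ := QuotientGroup.mk_out_eq_mul (center G) g
  obtain ⟨⟨w, hw⟩, hhw⟩ := QuotientGroup.mk_out_eq_mul (center G) h
  rw [hgz, hhw, commutatorElement_mul_of_mem_center_left _ _ hz,
    commutatorElement_mul_of_mem_center_right _ _ hw]

instance finite_commutatorSet_of_finiteIndex_center [(center G).FiniteIndex] :
    Finite (commutatorSet G) := by
  have hsub : commutatorSet G ⊆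
      Set.range fun q : (G ⧸ center G) × (G ⧸ center G) => ⁅q.1.out, q.2.out⁆ := by
    rintro _ ⟨g, h, rfl⟩
    exact ⟨(g, h), commutatorElement_out_mk_center g h⟩
  exact ((Set.finite_range _).subset hsub).to_subtype

end Subgroup

/-- Schur's theorem: if the centre has finite index, the commutator subgroup is finite. -/
theorem schur_commutator_finite (G : Type*) [Group G]
    (h : (Subgroup.center G).index ≠ 0) :
    Finite (commutator G) := by
  have : (center G).FiniteIndex := ⟨h⟩
  infer_instance
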